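/- arXiv:1710.06678 — 6 statements merged into one kernel-verified Lean document; each statement's English description precedes it below -/
import Mathlib

section
/- (Expansion theorem) For every PNF formula φ, Θ(LF(φ)) is equivalent to φ; that is, for every infinite word σ, σ ⊨ φ if and only if there exists a linear factor ⟨μ, Γ⟩ ∈ LF(φ) such that σ ⊨ Θ(μ) and σ[1..] ⊨ ⋀Γ. -/
open scoped Classical

/-- LTL formulae in positive normal form. -/
inductive LTL (AP : Type) : Type
  | pos  : AP → LTL AP                      -- atomic proposition p
  | nneg : AP → LTL AP                      -- negated atomic proposition ¬p
  | tt   : LTL AP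
  | ff   : LTL AP
  | conj : LTL AP → LTL AP → LTL AP
  | disj : LTL AP → LTL AP → LTL AP
  | next : LTL AP → LTL AP
  | untl : LTL AP → LTL AP → LTL AP
  | rels : LTL AP → LTL AP → LTL AP
  deriving DecidableEq

/-- Literals over AP. -/
inductive Lit (AP : Type) : Type
  | pos : AP → Lit AP
  | neg : AP → Lit AP
  deriving DecidableEq

namespace Lit

variable {AP : Type} {S : Type}

/-- Negation of a literal. -/
def negate : Lit AP → Lit AP
  | pos p => neg p
  | neg p => pos p

/-- The LTL formula corresponding to a literal. -/
def toLTL : Lit AP → LTL AP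
  | pos p => LTL.pos p
  | neg p => LTL.nneg p

/-- A literal holds at a symbol `x` relative to the interpretation `I`. -/
def Holds (I : S → Set AP) (x : S) : Lit AP → Prop
  | pos p => p ∈ I x
  | neg p => p ∉ I x

end Lit

/-- A monomial: `none` represents ff, and `some s` a finite set of literals. -/
abbrev Mono (AP : Type) : Type := Option (Finset (Lit AP))

namespace LTL

variable {AP : Type} {S : Type}

/-- Suffix of an infinite word: `suffix σ n = σ[n..]`. -/
def suffix (σ : ℕ → S) (n : ℕ) : ℕ → S := fun i => σ (n + i)

/-- Satisfaction `σ ⊨ φ` of an LTL formula on an infinite word. -/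
def Sat (I : S → Set AP) : LTL AP → (ℕ → S) → Prop
  | pos p, σ => p ∈ I (σ 0)
  | nneg p, σ => p ∉ I (σ 0)
  | tt, _ => True
  | ff, _ => False
  | conj φ ψ, σ => Sat I φ σ ∧ Sat I ψ σ
  | disj φ ψ, σ => Sat I φ σ ∨ Sat I ψ σ
  | next φ, σ => Sat I φ (suffix σ 1)
  | untl φ ψ, σ => ∃ n, (∀ j < n, Sat I φ (suffix σ j)) ∧ Sat I ψ (suffix σ n)
  | rels φ ψ, σ => ∀ n, Sat I ψ (suffix σ n) ∨ ∃ j < n, Sat I φ (suffix σ j)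

/-- A monomial is valid if it contains no complementary pair of literals. -/
def MonoValid : Mono AP → Prop
  | none => True
  | some s => ∀ ℓ ∈ s, ℓ.negate ∉ s

/-- Smart conjunction `μ ⩀ ν` of monomials. -/
noncomputable def scm [DecidableEq AP] : Mono AP → Mono AP → Mono AP
  | some μ, some ν =>
      if ∃ ℓ ∈ μ ∪ ν, Lit.negate ℓ ∈ μ ∪ ν then none else some (μ ∪ ν)
  | _, _ => none

/-- The formula `Θ(μ)` associated with a monomial. -/
noncomputable def Theta : Mono AP → LTL AP
  | none => LTL.ff
  | some s => (s.toList.map Lit.toLTL).foldr LTL.conj LTL.tt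

/-- A temporal formula: the outermost connective is neither ∧ nor ∨. -/
def Temporal : LTL AP → Prop
  | conj _ _ => False
  | disj _ _ => False
  | _ => True

/-- Satisfaction of a formal conjunction `⋀Γ` (a finite set of formulae). -/
def SatConj (I : S → Set AP) (Γ : Finset (LTL AP)) (σ : ℕ → S) : Prop :=
  ∀ χ ∈ Γ, Sat I χ σ

/-- Set-based conjunctive normal form `SIMP`. -/
def SIMP [DecidableEq AP] : LTL AP → Finset (Finset (LTL AP))
  | conj φ ψ => (SIMP φ).biUnion fun Γ => (SIMP ψ).image fun Δ => Γ ∪ Δ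
  | disj φ ψ => SIMP φ ∪ SIMP ψ
  | φ => {{φ}}

/-- Linear factors `LF(φ)`: pairs of a monomial (≠ ff) and a formal conjunction. -/
noncomputable def LF [DecidableEq AP] : LTL AP → Finset (Mono AP × Finset (LTL AP))
  | pos p => {(some {Lit.pos p}, ∅)}
  | nneg p => {(some {Lit.neg p}, ∅)}
  | tt => {(some ∅, ∅)}
  | ff => ∅
  | disj φ ψ => LF φ ∪ LF ψ
  | conj φ ψ =>
      ((LF φ ×ˢ LF ψ).image fun pq => (scm pq.1.1 pq.2.1, pq.1.2 ∪ pq.2.2)).filter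
        fun mg => mg.1 ≠ none
  | next φ => (SIMP φ).image fun Γ => ((some ∅ : Mono AP), Γ)
  | untl φ ψ => LF ψ ∪ (LF φ).image fun mg => (mg.1, insert (untl φ ψ) mg.2)
  | rels φ ψ =>
      (((LF φ ×ˢ LF ψ).image fun pq => (scm pq.1.1 pq.2.1, pq.1.2 ∪ pq.2.2)).filter
        fun mg => mg.1 ≠ none)
      ∪ (LF ψ).image fun mg => (mg.1, insert (rels φ ψ) mg.2)

/-- A symbol satisfies a monomial: `x ⊨ μ`. -/
def MonoHolds (I : S → Set AP) (x : S) : Mono AP → Prop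
  | none => False
  | some s => ∀ ℓ ∈ s, Lit.Holds I x ℓ

/-- Direct partial derivatives `∂(φ, x)`. -/
noncomputable def pd [DecidableEq AP] (I : S → Set AP) : LTL AP → S → Finset (Finset (LTL AP))
  | tt, _ => {∅}
  | ff, _ => ∅
  | pos p, x => if p ∈ I x then {∅} else ∅
  | nneg p, x => if p ∉ I x then {∅} else ∅
  | disj φ ψ, x => pd I φ x ∪ pd I ψ x
  | conj φ ψ, x => ((pd I φ x) ×ˢ (pd I ψ x)).image fun gd => gd.1 ∪ gd.2
  | next φ, _ => SIMP φ
  | untl φ ψ, x => pd I ψ x ∪ (pd I φ x).image fun Γ => insert (untl φ ψ) Γ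
  | rels φ ψ, x =>
      (((pd I φ x) ×ˢ (pd I ψ x)).image fun gd => gd.1 ∪ gd.2)
      ∪ (pd I ψ x).image fun Δ => insert (rels φ ψ) Δ

/-- Iterated partial derivatives `∂⁺(φ)`. -/
def dplus [DecidableEq AP] : LTL AP → Finset (LTL AP)
  | pos p => {pos p}
  | nneg p => {nneg p}
  | tt => {tt}
  | ff => {ff}
  | disj φ ψ => dplus φ ∪ dplus ψ
  | conj φ ψ => dplus φ ∪ dplus ψ
  | next φ => insert (next φ) (dplus φ)
  | untl φ ψ => insert (untl φ ψ) (dplus φ ∪ dplus ψ)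
  | rels φ ψ => insert (rels φ ψ) (dplus φ ∪ dplus ψ)

/-- Size of a formula: number of occurrences of literals, constants and operators. -/
def size : LTL AP → ℕ
  | pos _ => 1
  | nneg _ => 1
  | tt => 1
  | ff => 1
  | conj φ ψ => size φ + size ψ + 1
  | disj φ ψ => size φ + size ψ + 1
  | next φ => size φ + 1
  | untl φ ψ => size φ + size ψ + 1
  | rels φ ψ => size φ + size ψ + 1

/-- Partial derivative of a formal conjunction: `∂(Γ, x)`. -/
def pdC [DecidableEq AP] (I : S → Set AP) (Γ : Finset (LTL AP)) (x : S) :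
    Set (Finset (LTL AP)) :=
  { Δ | ∃ f : LTL AP → Finset (LTL AP), (∀ χ ∈ Γ, f χ ∈ pd I χ x) ∧ Δ = Γ.biUnion f }

/-- The set `D(φ)` of partial derivative descendants of `φ` (smallest set closed
under the two rules). -/
inductive Desc [DecidableEq AP] (I : S → Set AP) (φ : LTL AP) : Finset (LTL AP) → Prop
  | base (x : S) (Γ : Finset (LTL AP)) : Γ ∈ pd I φ x → Desc I φ Γ
  | step (x : S) (Γ Δ : Finset (LTL AP)) : Desc I φ Γ → Δ ∈ pdC I Γ x → Desc I φ Δ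

end LTL


section Aux

open LTL

variable {AP S : Type} [DecidableEq AP]

lemma suffix_zero (σ : ℕ → S) : suffix σ 0 = σ := funext fun i => by simp [suffix]

lemma suffix_suffix (σ : ℕ → S) (m n : ℕ) :
    suffix (suffix σ m) n = suffix σ (m + n) := by
  funext i; simp [suffix, Nat.add_assoc]

lemma lit_sat (I : S → Set AP) (ℓ : Lit AP) (σ : ℕ → S) :
    Sat I ℓ.toLTL σ ↔ Lit.Holds I (σ 0) ℓ := by
  cases ℓ <;> rfl

lemma foldr_sat (I : S → Set AP) (l : List (Lit AP)) (σ : ℕ → S) :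
    Sat I ((l.map Lit.toLTL).foldr LTL.conj LTL.tt) σ ↔ ∀ ℓ ∈ l, Lit.Holds I (σ 0) ℓ := by
  induction l with
  | nil => simp [Sat]
  | cons a l ih => simp [Sat, ih, lit_sat]

lemma theta_sat (I : S → Set AP) (μ : Mono AP) (σ : ℕ → S) :
    Sat I (Theta μ) σ ↔ MonoHolds I (σ 0) μ := by
  cases μ with
  | none => simp [Theta, Sat, MonoHolds]
  | some s =>
    simp only [Theta, MonoHolds, foldr_sat, Finset.mem_toList]

lemma holds_negate (I : S → Set AP) (x : S) (ℓ : Lit AP) :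
    Lit.Holds I x ℓ → Lit.Holds I x ℓ.negate → False := by
  cases ℓ <;> simp_all [Lit.Holds, Lit.negate]

lemma scm_holds (I : S → Set AP) (x : S) (μ ν : Mono AP) :
    MonoHolds I x (scm μ ν) ↔ MonoHolds I x μ ∧ MonoHolds I x ν := by
  cases μ with
  | none => simp [scm, MonoHolds]
  | some a =>
    cases ν with
    | none => simp [scm, MonoHolds]
    | some b =>
      by_cases h : ∃ ℓ ∈ a ∪ b, Lit.negate ℓ ∈ a ∪ b
      · simp only [scm, if_pos h, MonoHolds]
        constructor
        · intro hh; exact hh.elim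
        · rintro ⟨h1, h2⟩
          obtain ⟨ℓ, hℓ, hn⟩ := h
          have H : ∀ m ∈ a ∪ b, Lit.Holds I x m := by
            intro m hm
            rcases Finset.mem_union.1 hm with hm | hm
            exacts [h1 m hm, h2 m hm]
          exact holds_negate I x ℓ (H ℓ hℓ) (H _ hn)
      · simp only [scm, if_neg h, MonoHolds]
        constructor
        · intro H
          exact ⟨fun m hm => H m (Finset.mem_union_left _ hm),
            fun m hm => H m (Finset.mem_union_right _ hm)⟩
        · rintro ⟨h1, h2⟩ m hm
          rcases Finset.mem_union.1 hm with hm | hm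
          exacts [h1 m hm, h2 m hm]

lemma satConj_union (I : S → Set AP) (Γ Δ : Finset (LTL AP)) (σ : ℕ → S) :
    SatConj I (Γ ∪ Δ) σ ↔ SatConj I Γ σ ∧ SatConj I Δ σ := by
  simp [SatConj, Finset.mem_union, or_imp, forall_and]

lemma satConj_insert (I : S → Set AP) (χ : LTL AP) (Γ : Finset (LTL AP)) (σ : ℕ → S) :
    SatConj I (insert χ Γ) σ ↔ Sat I χ σ ∧ SatConj I Γ σ := by
  simp [SatConj, Finset.mem_insert, or_imp, forall_and]

lemma simp_sat (I : S → Set AP) (φ : LTL AP) (σ : ℕ → S) :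
    Sat I φ σ ↔ ∃ Γ ∈ SIMP φ, SatConj I Γ σ := by
  induction φ with
  | pos p => simp [SIMP, SatConj, Sat]
  | nneg p => simp [SIMP, SatConj, Sat]
  | tt => simp [SIMP, SatConj, Sat]
  | ff => simp [SIMP, SatConj, Sat]
  | next φ ih => simp [SIMP, SatConj, Sat]
  | untl φ ψ ihφ ihψ => simp [SIMP, SatConj, Sat]
  | rels φ ψ ihφ ihψ => simp [SIMP, SatConj, Sat]
  | disj φ ψ ihφ ihψ =>
    simp only [Sat, ihφ, ihψ, SIMP, Finset.mem_union]
    aesop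
  | conj φ ψ ihφ ihψ =>
    simp only [Sat, ihφ, ihψ, SIMP]
    constructor
    · rintro ⟨⟨Γ, hΓ, hΓs⟩, ⟨Δ, hΔ, hΔs⟩⟩
      refine ⟨Γ ∪ Δ, ?_, (satConj_union I Γ Δ σ).2 ⟨hΓs, hΔs⟩⟩
      simp only [Finset.mem_biUnion, Finset.mem_image]
      exact ⟨Γ, hΓ, Δ, hΔ, rfl⟩
    · rintro ⟨Θ, hΘ, hΘs⟩
      simp only [Finset.mem_biUnion, Finset.mem_image] at hΘ
      obtain ⟨Γ, hΓ, Δ, hΔ, rfl⟩ := hΘ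
      obtain ⟨h1, h2⟩ := (satConj_union I Γ Δ σ).1 hΘs
      exact ⟨⟨Γ, hΓ, h1⟩, ⟨Δ, hΔ, h2⟩⟩

lemma untl_unfold (I : S → Set AP) (φ ψ : LTL AP) (σ : ℕ → S) :
    Sat I (LTL.untl φ ψ) σ ↔
      Sat I ψ σ ∨ (Sat I φ σ ∧ Sat I (LTL.untl φ ψ) (suffix σ 1)) := by
  constructor
  · rintro ⟨n, hφ, hψ⟩
    cases n with
    | zero => left; rwa [suffix_zero] at hψ
    | succ n =>
      right
      refine ⟨by simpa [suffix_zero] using hφ 0 (Nat.succ_pos n), n, fun j hj => ?_, ?_⟩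
      · rw [suffix_suffix]; exact hφ (1 + j) (by omega)
      · rw [suffix_suffix, Nat.add_comm]; exact hψ
  · rintro (hψ | ⟨hφ0, n, h1, h2⟩)
    · exact ⟨0, fun j hj => absurd hj (Nat.not_lt_zero j), by rwa [suffix_zero]⟩
    · refine ⟨n + 1, fun j hj => ?_, ?_⟩
      · cases j with
        | zero => rwa [suffix_zero]
        | succ k =>
          have := h1 k (by omega)
          rw [suffix_suffix] at this
          rwa [show k + 1 = 1 + k by omega]
      · rw [suffix_suffix] at h2
        rwa [show n + 1 = 1 + n by omega]

lemma rels_unfold (I : S → Set AP) (φ ψ : LTL AP) (σ : ℕ → S) :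
    Sat I (LTL.rels φ ψ) σ ↔
      Sat I ψ σ ∧ (Sat I φ σ ∨ Sat I (LTL.rels φ ψ) (suffix σ 1)) := by
  constructor
  · intro h
    have hψ0 : Sat I ψ σ := by
      rcases h 0 with h0 | ⟨j, hj, _⟩
      · rwa [suffix_zero] at h0
      · omega
    refine ⟨hψ0, ?_⟩
    by_cases hφ : Sat I φ σ
    · exact Or.inl hφ
    · right
      intro n
      rcases h (n + 1) with h0 | ⟨j, hj, hjφ⟩
      · left; rw [suffix_suffix, show 1 + n = n + 1 by omega]; exact h0
      · cases j with
        | zero => rw [suffix_zero] at hjφ; exact absurd hjφ hφ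
        | succ k =>
          right
          exact ⟨k, by omega, by rw [suffix_suffix, show 1 + k = k + 1 by omega]; exact hjφ⟩
  · rintro ⟨hψ, hφ | hr⟩
    · intro n
      cases n with
      | zero => left; rwa [suffix_zero]
      | succ k => exact Or.inr ⟨0, Nat.succ_pos k, by rwa [suffix_zero]⟩
    · intro n
      cases n with
      | zero => left; rwa [suffix_zero]
      | succ k =>
        rcases hr k with h0 | ⟨j, hj, hjφ⟩
        · left; rw [suffix_suffix, show 1 + k = k + 1 by omega] at h0; exact h0
        · right
          refine ⟨j + 1, by omega, ?_⟩
          rw [suffix_suffix, show 1 + j = j + 1 by omega] at hjφ; exact hjφ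

end Aux

/-- Expansion theorem: `Θ(LF(φ)) ⇔ φ`. -/
theorem lf_expansion {AP S : Type} [Fintype AP] [Fintype S] [DecidableEq AP]
    (I : S → Set AP) (φ : LTL AP) (σ : ℕ → S) :
    LTL.Sat I φ σ ↔
      ∃ μ Γ, (μ, Γ) ∈ LTL.LF φ ∧ LTL.Sat I (LTL.Theta μ) σ ∧
        LTL.SatConj I Γ (LTL.suffix σ 1) := by
  induction φ with
  | pos p =>
    simp only [LTL.LF, Finset.mem_singleton, Prod.mk.injEq]
    constructor
    · intro h
      refine ⟨some {Lit.pos p}, ∅, ⟨rfl, rfl⟩, (theta_sat I _ σ).2 ?_, fun χ hχ => absurd hχ (Finset.notMem_empty χ)⟩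
      intro ℓ hℓ
      rw [Finset.mem_singleton] at hℓ
      subst hℓ
      exact h
    · rintro ⟨μ, Γ, ⟨rfl, rfl⟩, hθ, -⟩
      exact (theta_sat I _ σ).1 hθ _ (Finset.mem_singleton_self _)
  | nneg p =>
    simp only [LTL.LF, Finset.mem_singleton, Prod.mk.injEq]
    constructor
    · intro h
      refine ⟨some {Lit.neg p}, ∅, ⟨rfl, rfl⟩, (theta_sat I _ σ).2 ?_, fun χ hχ => absurd hχ (Finset.notMem_empty χ)⟩
      intro ℓ hℓ
      rw [Finset.mem_singleton] at hℓ
      subst hℓ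
      exact h
    · rintro ⟨μ, Γ, ⟨rfl, rfl⟩, hθ, -⟩
      exact (theta_sat I _ σ).1 hθ _ (Finset.mem_singleton_self _)
  | tt =>
    simp only [LTL.LF, Finset.mem_singleton, Prod.mk.injEq]
    constructor
    · intro _
      exact ⟨some ∅, ∅, ⟨rfl, rfl⟩,
        (theta_sat I _ σ).2 (fun ℓ hℓ => absurd hℓ (Finset.notMem_empty ℓ)),
        fun χ hχ => absurd hχ (Finset.notMem_empty χ)⟩
    · intro _; trivial
  | ff =>
    simp [LTL.LF, LTL.Sat]
  | disj φ ψ ihφ ihψ =>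
    rw [show LTL.Sat I (LTL.disj φ ψ) σ = (LTL.Sat I φ σ ∨ LTL.Sat I ψ σ) from rfl, ihφ, ihψ]
    simp only [LTL.LF, Finset.mem_union]
    constructor
    · rintro (⟨μ, Γ, hm, hθ, hc⟩ | ⟨μ, Γ, hm, hθ, hc⟩)
      exacts [⟨μ, Γ, Or.inl hm, hθ, hc⟩, ⟨μ, Γ, Or.inr hm, hθ, hc⟩]
    · rintro ⟨μ, Γ, hm | hm, hθ, hc⟩
      exacts [Or.inl ⟨μ, Γ, hm, hθ, hc⟩, Or.inr ⟨μ, Γ, hm, hθ, hc⟩]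
  | conj φ ψ ihφ ihψ =>
    rw [show LTL.Sat I (LTL.conj φ ψ) σ = (LTL.Sat I φ σ ∧ LTL.Sat I ψ σ) from rfl, ihφ, ihψ]
    constructor
    · rintro ⟨⟨μ, Γ, hm, hθ, hc⟩, ⟨ν, Δ, hm', hθ', hc'⟩⟩
      have hθs : LTL.MonoHolds I (σ 0) (LTL.scm μ ν) :=
        (scm_holds I _ μ ν).2 ⟨(theta_sat I μ σ).1 hθ, (theta_sat I ν σ).1 hθ'⟩
      refine ⟨LTL.scm μ ν, Γ ∪ Δ, ?_, (theta_sat I _ σ).2 hθs, (satConj_union I Γ Δ _).2 ⟨hc, hc'⟩⟩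
      simp only [LTL.LF, Finset.mem_filter, Finset.mem_image, Finset.mem_product]
      refine ⟨⟨((μ, Γ), (ν, Δ)), ⟨hm, hm'⟩, rfl⟩, fun hn => ?_⟩
      rw [hn] at hθs
      exact hθs
    · rintro ⟨μ, Γ, hm, hθ, hc⟩
      simp only [LTL.LF, Finset.mem_filter, Finset.mem_image, Finset.mem_product] at hm
      obtain ⟨⟨⟨⟨μ1, Γ1⟩, ⟨μ2, Γ2⟩⟩, ⟨h1, h2⟩, heq⟩, -⟩ := hm
      cases heq
      obtain ⟨hh1, hh2⟩ := (scm_holds I _ μ1 μ2).1 ((theta_sat I _ σ).1 hθ)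
      obtain ⟨hc1, hc2⟩ := (satConj_union I Γ1 Γ2 _).1 hc
      exact ⟨⟨_, _, h1, (theta_sat I _ σ).2 hh1, hc1⟩, ⟨_, _, h2, (theta_sat I _ σ).2 hh2, hc2⟩⟩
  | next φ ih =>
    simp only [LTL.LF, Finset.mem_image]
    constructor
    · intro h
      obtain ⟨Γ, hΓ, hs⟩ := (simp_sat I φ (LTL.suffix σ 1)).1 h
      exact ⟨some ∅, Γ, ⟨Γ, hΓ, rfl⟩,
        (theta_sat I _ σ).2 (fun ℓ hℓ => absurd hℓ (Finset.notMem_empty ℓ)), hs⟩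
    · rintro ⟨μ, Γ, ⟨Δ, hΔ, heq⟩, hθ, hs⟩
      cases heq
      exact (simp_sat I φ (LTL.suffix σ 1)).2 ⟨_, hΔ, hs⟩
  | untl φ ψ ihφ ihψ =>
    rw [untl_unfold, ihφ, ihψ]
    simp only [LTL.LF, Finset.mem_union, Finset.mem_image]
    constructor
    · rintro (⟨μ, Γ, hm, hθ, hc⟩ | ⟨⟨μ, Γ, hm, hθ, hc⟩, hu⟩)
      · exact ⟨μ, Γ, Or.inl hm, hθ, hc⟩
      · exact ⟨μ, insert (LTL.untl φ ψ) Γ, Or.inr ⟨(μ, Γ), hm, rfl⟩, hθ,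
          (satConj_insert I _ Γ _).2 ⟨hu, hc⟩⟩
    · rintro ⟨μ, Γ, hm | ⟨⟨ν, Δ⟩, hm, heq⟩, hθ, hc⟩
      · exact Or.inl ⟨μ, Γ, hm, hθ, hc⟩
      · cases heq
        obtain ⟨hu, hc⟩ := (satConj_insert I _ Δ _).1 hc
        exact Or.inr ⟨⟨_, _, hm, hθ, hc⟩, hu⟩
  | rels φ ψ ihφ ihψ =>
    rw [rels_unfold]
    simp only [LTL.LF, Finset.mem_union, Finset.mem_filter, Finset.mem_image, Finset.mem_product]
    constructor
    · rintro ⟨hψ, hφ | hr⟩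
      · obtain ⟨μ, Γ, hm, hθ, hc⟩ := ihφ.1 hφ
        obtain ⟨ν, Δ, hm', hθ', hc'⟩ := ihψ.1 hψ
        have hθs : LTL.MonoHolds I (σ 0) (LTL.scm μ ν) :=
          (scm_holds I _ μ ν).2 ⟨(theta_sat I μ σ).1 hθ, (theta_sat I ν σ).1 hθ'⟩
        refine ⟨LTL.scm μ ν, Γ ∪ Δ,
          Or.inl ⟨⟨((μ, Γ), (ν, Δ)), ⟨hm, hm'⟩, rfl⟩, fun hn => ?_⟩,
          (theta_sat I _ σ).2 hθs, (satConj_union I Γ Δ _).2 ⟨hc, hc'⟩⟩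
        rw [hn] at hθs
        exact hθs
      · obtain ⟨ν, Δ, hm', hθ', hc'⟩ := ihψ.1 hψ
        exact ⟨ν, insert (LTL.rels φ ψ) Δ, Or.inr ⟨(ν, Δ), hm', rfl⟩, hθ',
          (satConj_insert I _ Δ _).2 ⟨hr, hc'⟩⟩
    · rintro ⟨μ, Γ, ⟨⟨⟨⟨μ1, Γ1⟩, ⟨μ2, Γ2⟩⟩, ⟨h1, h2⟩, heq⟩, -⟩ | ⟨⟨ν, Δ⟩, hm, heq⟩, hθ, hc⟩
      · cases heq
        obtain ⟨hh1, hh2⟩ := (scm_holds I _ μ1 μ2).1 ((theta_sat I _ σ).1 hθ)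
        obtain ⟨hc1, hc2⟩ := (satConj_union I Γ1 Γ2 _).1 hc
        exact ⟨ihψ.2 ⟨_, _, h2, (theta_sat I _ σ).2 hh2, hc2⟩,
          Or.inl (ihφ.2 ⟨_, _, h1, (theta_sat I _ σ).2 hh1, hc1⟩)⟩
      · cases heq
        obtain ⟨hr, hc⟩ := (satConj_insert I _ Δ _).1 hc
        exact ⟨ihψ.2 ⟨_, _, hm, hθ, hc⟩, Or.inr hr⟩
end

section
/- (Closedness under derivation, part 1) For every PNF formula φ and every x ∈ Σ, ∂(φ, x) ⊆ FC(∂⁺(φ)); that is, every formal conjunction in the partial derivative of φ by x consists only of formulae belonging to ∂⁺(φ). -/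
open scoped Classical

theorem simp_subset_dplus {AP : Type} [DecidableEq AP] (φ : LTL AP)
    {Γ : Finset (LTL AP)} (h : Γ ∈ LTL.SIMP φ) : Γ ∈ (LTL.dplus φ).powerset := by
  induction φ generalizing Γ with
  | conj φ ψ ihφ ihψ =>
    simp only [LTL.SIMP, Finset.mem_biUnion, Finset.mem_image] at h
    obtain ⟨a, ha, b, hb, rfl⟩ := h
    simp only [LTL.dplus, Finset.mem_powerset]
    exact Finset.union_subset
      ((Finset.mem_powerset.mp (ihφ ha)).trans Finset.subset_union_left)
      ((Finset.mem_powerset.mp (ihψ hb)).trans Finset.subset_union_right)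
  | disj φ ψ ihφ ihψ =>
    simp only [LTL.SIMP, Finset.mem_union] at h
    simp only [LTL.dplus, Finset.mem_powerset]
    rcases h with h | h
    · exact (Finset.mem_powerset.mp (ihφ h)).trans Finset.subset_union_left
    · exact (Finset.mem_powerset.mp (ihψ h)).trans Finset.subset_union_right
  | _ => simp_all [LTL.SIMP, LTL.dplus]

/-- Closedness under derivation, part 1: `∂(φ, x) ⊆ FC(∂⁺(φ))`. -/
theorem pd_subset_fc {AP S : Type} [Fintype AP] [Fintype S] [DecidableEq AP]
    (I : S → Set AP) (φ : LTL AP) (x : S) :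
    LTL.pd I φ x ⊆ (LTL.dplus φ).powerset := by
  induction φ with
  | pos p =>
    intro Γ hΓ
    simp only [LTL.pd] at hΓ
    split_ifs at hΓ <;> simp_all [LTL.dplus]
  | nneg p =>
    intro Γ hΓ
    simp only [LTL.pd] at hΓ
    split_ifs at hΓ <;> simp_all [LTL.dplus]
  | tt => intro Γ hΓ; simp_all [LTL.pd, LTL.dplus]
  | ff => intro Γ hΓ; simp_all [LTL.pd]
  | conj φ ψ ihφ ihψ =>
    intro Γ hΓ
    simp only [LTL.pd, Finset.mem_image, Finset.mem_product] at hΓ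
    obtain ⟨⟨a, b⟩, ⟨ha, hb⟩, rfl⟩ := hΓ
    have ha' := Finset.mem_powerset.mp (ihφ ha)
    have hb' := Finset.mem_powerset.mp (ihψ hb)
    simp only [LTL.dplus, Finset.mem_powerset]
    exact Finset.union_subset (ha'.trans Finset.subset_union_left)
      (hb'.trans Finset.subset_union_right)
  | disj φ ψ ihφ ihψ =>
    intro Γ hΓ
    simp only [LTL.pd, Finset.mem_union] at hΓ
    simp only [LTL.dplus, Finset.mem_powerset]
    rcases hΓ with h | h
    · exact (Finset.mem_powerset.mp (ihφ h)).trans Finset.subset_union_left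
    · exact (Finset.mem_powerset.mp (ihψ h)).trans Finset.subset_union_right
  | next φ ih =>
    intro Γ hΓ
    simp only [LTL.pd] at hΓ
    simp only [LTL.dplus, Finset.mem_powerset]
    exact (Finset.mem_powerset.mp (simp_subset_dplus φ hΓ)).trans
      (Finset.subset_insert _ _)
  | untl φ ψ ihφ ihψ =>
    intro Γ hΓ
    simp only [LTL.pd, Finset.mem_union, Finset.mem_image] at hΓ
    simp only [LTL.dplus, Finset.mem_powerset]
    rcases hΓ with h | ⟨a, ha, rfl⟩
    · exact ((Finset.mem_powerset.mp (ihψ h)).trans Finset.subset_union_right).trans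
        (Finset.subset_insert _ _)
    · refine Finset.insert_subset (Finset.mem_insert_self _ _) ?_
      exact ((Finset.mem_powerset.mp (ihφ ha)).trans Finset.subset_union_left).trans
        (Finset.subset_insert _ _)
  | rels φ ψ ihφ ihψ =>
    intro Γ hΓ
    simp only [LTL.pd, Finset.mem_union, Finset.mem_image, Finset.mem_product] at hΓ
    simp only [LTL.dplus, Finset.mem_powerset]
    rcases hΓ with ⟨⟨a, b⟩, ⟨ha, hb⟩, rfl⟩ | ⟨a, ha, rfl⟩
    · refine (Finset.union_subset ?_ ?_).trans (Finset.subset_insert _ _)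
      · exact (Finset.mem_powerset.mp (ihφ ha)).trans Finset.subset_union_left
      · exact (Finset.mem_powerset.mp (ihψ hb)).trans Finset.subset_union_right
    · refine Finset.insert_subset (Finset.mem_insert_self _ _) ?_
      exact ((Finset.mem_powerset.mp (ihψ ha)).trans Finset.subset_union_right).trans
        (Finset.subset_insert _ _)
end

section
/- (Closedness under derivation, part 2) For every PNF formula φ, every φ' ∈ ∂⁺(φ), and every x ∈ Σ, ∂(φ', x) ⊆ FC(∂⁺(φ)). -/
open scoped Classical

namespace LTL

variable {AP S : Type} [DecidableEq AP]

lemma simp_subset_dplus : ∀ (φ : LTL AP), ∀ Γ ∈ SIMP φ, Γ ⊆ dplus φ := by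
  intro φ
  induction φ with
  | conj φ ψ ihφ ihψ =>
      intro Γ hΓ
      simp only [SIMP, Finset.mem_biUnion, Finset.mem_image] at hΓ
      obtain ⟨A, hA, B, hB, rfl⟩ := hΓ
      exact Finset.union_subset ((ihφ A hA).trans Finset.subset_union_left)
        ((ihψ B hB).trans Finset.subset_union_right)
  | disj φ ψ ihφ ihψ =>
      intro Γ hΓ
      simp only [SIMP, Finset.mem_union] at hΓ
      rcases hΓ with h | h
      · exact (ihφ Γ h).trans Finset.subset_union_left
      · exact (ihψ Γ h).trans Finset.subset_union_right
  | pos p => intro Γ hΓ; simp only [SIMP, Finset.mem_singleton] at hΓ; subst hΓ; simp [dplus]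
  | nneg p => intro Γ hΓ; simp only [SIMP, Finset.mem_singleton] at hΓ; subst hΓ; simp [dplus]
  | tt => intro Γ hΓ; simp only [SIMP, Finset.mem_singleton] at hΓ; subst hΓ; simp [dplus]
  | ff => intro Γ hΓ; simp only [SIMP, Finset.mem_singleton] at hΓ; subst hΓ; simp [dplus]
  | next φ ih =>
      intro Γ hΓ
      simp only [SIMP, Finset.mem_singleton] at hΓ; subst hΓ
      intro χ hχ; simp only [Finset.mem_singleton] at hχ; subst hχ
      simp [dplus]
  | untl φ ψ ihφ ihψ =>
      intro Γ hΓ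
      simp only [SIMP, Finset.mem_singleton] at hΓ; subst hΓ
      intro χ hχ; simp only [Finset.mem_singleton] at hχ; subst hχ
      simp [dplus]
  | rels φ ψ ihφ ihψ =>
      intro Γ hΓ
      simp only [SIMP, Finset.mem_singleton] at hΓ; subst hΓ
      intro χ hχ; simp only [Finset.mem_singleton] at hχ; subst hχ
      simp [dplus]

lemma pd_subset_dplus (I : S → Set AP) (x : S) :
    ∀ (φ : LTL AP), ∀ Γ ∈ pd I φ x, Γ ⊆ dplus φ := by
  intro φ
  induction φ with
  | pos p =>
      intro Γ hΓ
      simp only [pd] at hΓ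
      split at hΓ
      · simp only [Finset.mem_singleton] at hΓ; subst hΓ; simp
      · simp at hΓ
  | nneg p =>
      intro Γ hΓ
      simp only [pd] at hΓ
      split at hΓ
      · simp only [Finset.mem_singleton] at hΓ; subst hΓ; simp
      · simp at hΓ
  | tt =>
      intro Γ hΓ
      simp only [pd, Finset.mem_singleton] at hΓ; subst hΓ; simp
  | ff => intro Γ hΓ; simp [pd] at hΓ
  | conj φ ψ ihφ ihψ =>
      intro Γ hΓ
      simp only [pd, Finset.mem_image, Finset.mem_product] at hΓ
      obtain ⟨⟨A, B⟩, ⟨hA, hB⟩, rfl⟩ := hΓ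
      exact Finset.union_subset ((ihφ A hA).trans Finset.subset_union_left)
        ((ihψ B hB).trans Finset.subset_union_right)
  | disj φ ψ ihφ ihψ =>
      intro Γ hΓ
      simp only [pd, Finset.mem_union] at hΓ
      rcases hΓ with h | h
      · exact (ihφ Γ h).trans Finset.subset_union_left
      · exact (ihψ Γ h).trans Finset.subset_union_right
  | next φ ih =>
      intro Γ hΓ
      simp only [pd] at hΓ
      exact (simp_subset_dplus φ Γ hΓ).trans (Finset.subset_insert _ _)
  | untl φ ψ ihφ ihψ =>
      intro Γ hΓ
      simp only [pd, Finset.mem_union, Finset.mem_image] at hΓ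
      rcases hΓ with h | ⟨A, hA, rfl⟩
      · exact (ihψ Γ h).trans ((Finset.subset_union_right).trans (Finset.subset_insert _ _))
      · apply Finset.insert_subset (Finset.mem_insert_self _ _)
        exact (ihφ A hA).trans ((Finset.subset_union_left).trans (Finset.subset_insert _ _))
  | rels φ ψ ihφ ihψ =>
      intro Γ hΓ
      simp only [pd, Finset.mem_union, Finset.mem_image, Finset.mem_product] at hΓ
      rcases hΓ with ⟨⟨A, B⟩, ⟨hA, hB⟩, rfl⟩ | ⟨A, hA, rfl⟩
      · refine Finset.union_subset ?_ ?_
        · exact (ihφ A hA).trans ((Finset.subset_union_left).trans (Finset.subset_insert _ _))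
        · exact (ihψ B hB).trans ((Finset.subset_union_right).trans (Finset.subset_insert _ _))
      · apply Finset.insert_subset (Finset.mem_insert_self _ _)
        exact (ihψ A hA).trans ((Finset.subset_union_right).trans (Finset.subset_insert _ _))

lemma dplus_trans : ∀ (φ φ' : LTL AP), φ' ∈ dplus φ → dplus φ' ⊆ dplus φ := by
  intro φ
  induction φ with
  | pos p => intro φ' h; simp only [dplus, Finset.mem_singleton] at h; subst h; exact Finset.Subset.refl _
  | nneg p => intro φ' h; simp only [dplus, Finset.mem_singleton] at h; subst h; exact Finset.Subset.refl _
  | tt => intro φ' h; simp only [dplus, Finset.mem_singleton] at h; subst h; exact Finset.Subset.refl _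
  | ff => intro φ' h; simp only [dplus, Finset.mem_singleton] at h; subst h; exact Finset.Subset.refl _
  | conj φ ψ ihφ ihψ =>
      intro φ' h
      simp only [dplus, Finset.mem_union] at h
      rcases h with h | h
      · exact (ihφ φ' h).trans Finset.subset_union_left
      · exact (ihψ φ' h).trans Finset.subset_union_right
  | disj φ ψ ihφ ihψ =>
      intro φ' h
      simp only [dplus, Finset.mem_union] at h
      rcases h with h | h
      · exact (ihφ φ' h).trans Finset.subset_union_left
      · exact (ihψ φ' h).trans Finset.subset_union_right
  | next φ ih =>
      intro φ' h
      simp only [dplus, Finset.mem_insert] at h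
      rcases h with rfl | h
      · exact Finset.Subset.refl _
      · exact (ih φ' h).trans (Finset.subset_insert _ _)
  | untl φ ψ ihφ ihψ =>
      intro φ' h
      simp only [dplus, Finset.mem_insert, Finset.mem_union] at h
      rcases h with rfl | h | h
      · exact Finset.Subset.refl _
      · exact (ihφ φ' h).trans ((Finset.subset_union_left).trans (Finset.subset_insert _ _))
      · exact (ihψ φ' h).trans ((Finset.subset_union_right).trans (Finset.subset_insert _ _))
  | rels φ ψ ihφ ihψ =>
      intro φ' h
      simp only [dplus, Finset.mem_insert, Finset.mem_union] at h
      rcases h with rfl | h | h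
      · exact Finset.Subset.refl _
      · exact (ihφ φ' h).trans ((Finset.subset_union_left).trans (Finset.subset_insert _ _))
      · exact (ihψ φ' h).trans ((Finset.subset_union_right).trans (Finset.subset_insert _ _))

end LTL

/-- Closedness under derivation, part 2: for `φ' ∈ ∂⁺(φ)`,
`∂(φ', x) ⊆ FC(∂⁺(φ))`. -/
theorem pd_dplus_subset_fc {AP S : Type} [Fintype AP] [Fintype S] [DecidableEq AP]
    (I : S → Set AP) (φ φ' : LTL AP) (hφ' : φ' ∈ LTL.dplus φ) (x : S) :
    LTL.pd I φ' x ⊆ (LTL.dplus φ).powerset := by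
  intro Γ hΓ
  rw [Finset.mem_powerset]
  exact (LTL.pd_subset_dplus I x φ' Γ hΓ).trans (LTL.dplus_trans φ φ' hφ')
end

section
/- For every PNF formula φ and every x ∈ Σ, the linear-factor-based partial derivative coincides with the direct partial derivative: {Γ | ⟨μ, Γ⟩ ∈ LF(φ) and x ⊨ μ} = ∂(φ, x). -/
open scoped Classical

/-! Both sides are computed by the same recursion on `φ`, so the claim follows by structural
induction once `lfpd` is seen to commute with each way `LF` combines linear factors. The one
point with content is the conjunction `μ ⩀ ν`: a symbol satisfying `μ` and `ν` cannot satisfy a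
complementary pair, so `⩀` never discards a monomial that holds at `x`. -/

theorem Lit.not_holds_and_holds_negate {AP S : Type} (I : S → Set AP) (x : S) (ℓ : Lit AP) :
    ¬ (ℓ.Holds I x ∧ ℓ.negate.Holds I x) := by
  cases ℓ <;> simp [Lit.Holds, Lit.negate]

namespace LTL

variable {AP S : Type} [DecidableEq AP]

theorem monoHolds_scm (I : S → Set AP) (x : S) (μ ν : Mono AP) :
    MonoHolds I x (scm μ ν) ↔ MonoHolds I x μ ∧ MonoHolds I x ν := by
  rcases μ with _ | s <;> rcases ν with _ | t <;> simp only [scm, MonoHolds, false_and, and_false]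
  split_ifs with hcompl
  · simp only [false_iff, not_and]
    obtain ⟨ℓ, hℓ, hneg⟩ := hcompl
    intro hs ht
    have hall : ∀ m ∈ s ∪ t, m.Holds I x := by
      simpa only [Finset.mem_union, or_imp, forall_and] using And.intro hs ht
    exact Lit.not_holds_and_holds_negate I x ℓ ⟨hall ℓ hℓ, hall _ hneg⟩
  · simp only [Finset.mem_union, or_imp, forall_and]

noncomputable def lfpd (I : S → Set AP) (x : S) (L : Finset (Mono AP × Finset (LTL AP))) :
    Finset (Finset (LTL AP)) :=
  (L.filter fun mg => MonoHolds I x mg.1).image Prod.snd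

noncomputable def conjFactors (A B : Finset (Mono AP × Finset (LTL AP))) :
    Finset (Mono AP × Finset (LTL AP)) :=
  ((A ×ˢ B).image fun pq => (scm pq.1.1 pq.2.1, pq.1.2 ∪ pq.2.2)).filter fun mg => mg.1 ≠ none

variable (I : S → Set AP) (x : S)

theorem lfpd_union (A B : Finset (Mono AP × Finset (LTL AP))) :
    lfpd I x (A ∪ B) = lfpd I x A ∪ lfpd I x B := by
  rw [lfpd, Finset.filter_union, Finset.image_union]; rfl

theorem lfpd_image_insert (χ : LTL AP) (A : Finset (Mono AP × Finset (LTL AP))) :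
    lfpd I x (A.image fun mg => (mg.1, insert χ mg.2)) = (lfpd I x A).image (insert χ) := by
  ext Γ
  simp only [lfpd, Finset.mem_image, Finset.mem_filter, Prod.exists, Prod.mk.injEq]
  constructor
  · rintro ⟨_, _, ⟨⟨μ, Δ, hmem, rfl, rfl⟩, hμ⟩, rfl⟩
    exact ⟨Δ, ⟨μ, Δ, ⟨hmem, hμ⟩, rfl⟩, rfl⟩
  · rintro ⟨_, ⟨μ, Δ, ⟨hmem, hμ⟩, rfl⟩, rfl⟩
    exact ⟨μ, insert χ Δ, ⟨⟨μ, Δ, hmem, rfl, rfl⟩, hμ⟩, rfl⟩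

theorem lfpd_conjFactors (A B : Finset (Mono AP × Finset (LTL AP))) :
    lfpd I x (conjFactors A B) = (lfpd I x A ×ˢ lfpd I x B).image fun gd => gd.1 ∪ gd.2 := by
  ext Γ
  simp only [lfpd, conjFactors, Finset.mem_image, Finset.mem_filter, Finset.mem_product,
    Prod.exists, Prod.mk.injEq]
  constructor
  · rintro ⟨_, _, ⟨⟨⟨μ, Γ₁, ν, Γ₂, ⟨h₁, h₂⟩, rfl, rfl⟩, -⟩, hscm⟩, rfl⟩
    obtain ⟨hμ, hν⟩ := (monoHolds_scm I x μ ν).1 hscm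
    exact ⟨Γ₁, Γ₂, ⟨⟨μ, Γ₁, ⟨h₁, hμ⟩, rfl⟩, ⟨ν, Γ₂, ⟨h₂, hν⟩, rfl⟩⟩, rfl⟩
  · rintro ⟨_, _, ⟨⟨μ, Γ₁, ⟨h₁, hμ⟩, rfl⟩, ⟨ν, Γ₂, ⟨h₂, hν⟩, rfl⟩⟩, rfl⟩
    have hscm : MonoHolds I x (scm μ ν) := (monoHolds_scm I x μ ν).2 ⟨hμ, hν⟩
    exact ⟨scm μ ν, Γ₁ ∪ Γ₂, ⟨⟨⟨μ, Γ₁, ν, Γ₂, ⟨h₁, h₂⟩, rfl, rfl⟩, fun h ↦ by rwa [h] at hscm⟩,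
      hscm⟩, rfl⟩

theorem lfpd_singleton (μ : Mono AP) (Γ : Finset (LTL AP)) :
    lfpd I x {(μ, Γ)} = if MonoHolds I x μ then {Γ} else ∅ := by
  split_ifs with h <;> simp [lfpd, Finset.filter_singleton, h]

end LTL

theorem lf_pd_coincide_general {AP S : Type} [DecidableEq AP]
    (I : S → Set AP) (φ : LTL AP) (x : S) :
    ((LTL.LF φ).filter fun mg => LTL.MonoHolds I x mg.1).image Prod.snd =
      LTL.pd I φ x := by
  change LTL.lfpd I x (LTL.LF φ) = LTL.pd I φ x
  induction φ with
  | pos p => simp [LTL.LF, LTL.pd, LTL.lfpd_singleton, LTL.MonoHolds, Lit.Holds]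
  | nneg p => simp [LTL.LF, LTL.pd, LTL.lfpd_singleton, LTL.MonoHolds, Lit.Holds]
  | tt => simp [LTL.LF, LTL.pd, LTL.lfpd_singleton, LTL.MonoHolds]
  | ff => simp [LTL.LF, LTL.pd, LTL.lfpd]
  | next φ =>
    rw [LTL.LF, LTL.pd, LTL.lfpd, Finset.filter_true_of_mem (by simp [LTL.MonoHolds]),
      Finset.image_image]
    exact Finset.image_id
  | conj φ ψ ihφ ihψ => rw [LTL.LF, LTL.pd, ← ihφ, ← ihψ, ← LTL.lfpd_conjFactors]; rfl
  | disj φ ψ ihφ ihψ => rw [LTL.LF, LTL.pd, ← ihφ, ← ihψ, LTL.lfpd_union]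
  | untl φ ψ ihφ ihψ =>
    rw [LTL.LF, LTL.pd, ← ihφ, ← ihψ, LTL.lfpd_union, LTL.lfpd_image_insert]
  | rels φ ψ ihφ ihψ =>
    rw [LTL.LF, LTL.pd, ← ihφ, ← ihψ, LTL.lfpd_union, LTL.lfpd_image_insert,
      ← LTL.lfpd_conjFactors]
    rfl

/-- Theorem: the linear-factor-based partial derivative coincides with the
direct partial derivative: `{Γ | ⟨μ, Γ⟩ ∈ LF(φ), x ⊨ μ} = ∂(φ, x)`. -/
theorem lf_pd_coincide {AP S : Type} [Fintype AP] [Fintype S] [DecidableEq AP]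
    (I : S → Set AP) (φ : LTL AP) (x : S) :
    ((LTL.LF φ).filter fun mg => LTL.MonoHolds I x mg.1).image Prod.snd =
      LTL.pd I φ x :=
  lf_pd_coincide_general I φ x
end

section
/- (Expansion via partial derivatives) For every PNF formula φ and every infinite word σ : ℕ → Σ, σ ⊨ φ if and only if there exists a formal conjunction Γ ∈ ∂(φ, σ 0) such that σ[1..] ⊨ ⋀Γ. -/
open scoped Classical

namespace LTL

variable {AP : Type} {S : Type}

section Aux

variable {AP S : Type}

open LTL

lemma satConj_union (I : S → Set AP) (Γ Δ : Finset (LTL AP)) (σ : ℕ → S)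
    [DecidableEq AP] :
    SatConj I (Γ ∪ Δ) σ ↔ SatConj I Γ σ ∧ SatConj I Δ σ := by
  simp [SatConj, or_imp, forall_and]

lemma satConj_insert (I : S → Set AP) (φ : LTL AP) (Γ : Finset (LTL AP)) (σ : ℕ → S)
    [DecidableEq AP] :
    SatConj I (insert φ Γ) σ ↔ Sat I φ σ ∧ SatConj I Γ σ := by
  simp [SatConj, forall_and]

lemma suffix_suffix (σ : ℕ → S) (m n : ℕ) :
    suffix (suffix σ m) n = suffix σ (m + n) := by
  funext i; simp [suffix, Nat.add_assoc]

lemma suffix_zero (σ : ℕ → S) : suffix σ 0 = σ := by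
  funext i; simp [suffix]

lemma simp_correct [DecidableEq AP] (I : S → Set AP) (φ : LTL AP) (σ : ℕ → S) :
    Sat I φ σ ↔ ∃ Γ ∈ SIMP φ, SatConj I Γ σ := by
  induction φ with
  | conj φ ψ ihφ ihψ =>
    constructor
    · rintro ⟨hφ, hψ⟩
      obtain ⟨Γ, hΓ, hΓs⟩ := ihφ.mp hφ
      obtain ⟨Δ, hΔ, hΔs⟩ := ihψ.mp hψ
      refine ⟨Γ ∪ Δ, ?_, (satConj_union I Γ Δ σ).mpr ⟨hΓs, hΔs⟩⟩
      simp only [SIMP, Finset.mem_biUnion, Finset.mem_image]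
      exact ⟨Γ, hΓ, Δ, hΔ, rfl⟩
    · rintro ⟨E, hE, hEs⟩
      simp only [SIMP, Finset.mem_biUnion, Finset.mem_image] at hE
      obtain ⟨Γ, hΓ, Δ, hΔ, rfl⟩ := hE
      rw [satConj_union] at hEs
      exact ⟨ihφ.mpr ⟨Γ, hΓ, hEs.1⟩, ihψ.mpr ⟨Δ, hΔ, hEs.2⟩⟩
  | disj φ ψ ihφ ihψ =>
    simp only [SIMP, Finset.mem_union]
    constructor
    · rintro (h | h)
      · obtain ⟨Γ, hΓ, hs⟩ := ihφ.mp h; exact ⟨Γ, Or.inl hΓ, hs⟩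
      · obtain ⟨Γ, hΓ, hs⟩ := ihψ.mp h; exact ⟨Γ, Or.inr hΓ, hs⟩
    · rintro ⟨Γ, hΓ | hΓ, hs⟩
      · exact Or.inl (ihφ.mpr ⟨Γ, hΓ, hs⟩)
      · exact Or.inr (ihψ.mpr ⟨Γ, hΓ, hs⟩)
  | pos p => simp [SIMP, SatConj, Sat]
  | nneg p => simp [SIMP, SatConj, Sat]
  | tt => simp [SIMP, SatConj, Sat]
  | ff => simp [SIMP, SatConj, Sat]
  | next φ _ => simp [SIMP, SatConj, Sat]
  | untl φ ψ _ _ => simp [SIMP, SatConj, Sat]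
  | rels φ ψ _ _ => simp [SIMP, SatConj, Sat]

lemma untl_unfold (I : S → Set AP) (φ ψ : LTL AP) (σ : ℕ → S) :
    Sat I (LTL.untl φ ψ) σ ↔
      Sat I ψ σ ∨ (Sat I φ σ ∧ Sat I (LTL.untl φ ψ) (suffix σ 1)) := by
  constructor
  · rintro ⟨n, hφ, hψ⟩
    cases n with
    | zero => left; rwa [suffix_zero] at hψ
    | succ m =>
      right
      refine ⟨by simpa [suffix_zero] using hφ 0 (Nat.succ_pos m), m, ?_, ?_⟩
      · intro j hj
        rw [suffix_suffix]
        exact hφ (1 + j) (by omega)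
      · rw [suffix_suffix, Nat.add_comm]; exact hψ
  · rintro (h | ⟨hφ, n, hu, hv⟩)
    · exact ⟨0, by omega, by rwa [suffix_zero]⟩
    · refine ⟨n + 1, ?_, ?_⟩
      · intro j hj
        cases j with
        | zero => rwa [suffix_zero]
        | succ k =>
          have := hu k (by omega)
          rwa [suffix_suffix, Nat.add_comm 1 k] at this
      · have := hv
        rwa [suffix_suffix, Nat.add_comm] at this

lemma rels_unfold (I : S → Set AP) (φ ψ : LTL AP) (σ : ℕ → S) :
    Sat I (LTL.rels φ ψ) σ ↔
      (Sat I φ σ ∧ Sat I ψ σ) ∨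
        (Sat I ψ σ ∧ Sat I (LTL.rels φ ψ) (suffix σ 1)) := by
  constructor
  · intro h
    have hψ0 : Sat I ψ σ := by
      have := h 0
      rcases this with h' | ⟨j, hj, _⟩
      · rwa [suffix_zero] at h'
      · omega
    by_cases hφ0 : Sat I φ σ
    · exact Or.inl ⟨hφ0, hψ0⟩
    · refine Or.inr ⟨hψ0, fun n => ?_⟩
      rcases h (n + 1) with h' | ⟨j, hj, hjφ⟩
      · left; rwa [suffix_suffix, Nat.add_comm]
      · cases j with
        | zero => exact absurd (by rwa [suffix_zero] at hjφ) hφ0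
        | succ k =>
          right
          exact ⟨k, by omega, by rw [suffix_suffix, Nat.add_comm]; exact hjφ⟩
  · rintro (⟨hφ, hψ⟩ | ⟨hψ, hr⟩) n
    · cases n with
      | zero => left; rwa [suffix_zero]
      | succ m => right; exact ⟨0, Nat.succ_pos m, by rwa [suffix_zero]⟩
    · cases n with
      | zero => left; rwa [suffix_zero]
      | succ m =>
        rcases hr m with h' | ⟨j, hj, hjφ⟩
        · left; rwa [suffix_suffix, Nat.add_comm] at h'
        · right
          exact ⟨j + 1, by omega, by rwa [suffix_suffix, Nat.add_comm] at hjφ⟩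

end Aux

end LTL

/-- Expansion via partial derivatives: `σ ⊨ φ` iff some `Γ ∈ ∂(φ, σ 0)`
satisfies `σ[1..] ⊨ ⋀Γ`. -/
theorem expansion_pd {AP S : Type} [Fintype AP] [Fintype S] [DecidableEq AP]
    (I : S → Set AP) (φ : LTL AP) (σ : ℕ → S) :
    LTL.Sat I φ σ ↔
      ∃ Γ ∈ LTL.pd I φ (σ 0), LTL.SatConj I Γ (LTL.suffix σ 1) := by
  open LTL in
  induction φ with
  | pos p =>
    by_cases h : p ∈ I (σ 0) <;> simp [pd, Sat, SatConj, h]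
  | nneg p =>
    by_cases h : p ∈ I (σ 0) <;> simp [pd, Sat, SatConj, h]
  | tt => simp [pd, Sat, SatConj]
  | ff => simp [pd, Sat, SatConj]
  | conj φ ψ ihφ ihψ =>
    rw [show Sat I (LTL.conj φ ψ) σ ↔ Sat I φ σ ∧ Sat I ψ σ from Iff.rfl, ihφ, ihψ]
    constructor
    · rintro ⟨⟨Γ, hΓ, hΓs⟩, ⟨Δ, hΔ, hΔs⟩⟩
      refine ⟨Γ ∪ Δ, ?_, (LTL.satConj_union I Γ Δ _).mpr ⟨hΓs, hΔs⟩⟩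
      simp only [pd, Finset.mem_image, Finset.mem_product]
      exact ⟨(Γ, Δ), ⟨hΓ, hΔ⟩, rfl⟩
    · rintro ⟨E, hE, hEs⟩
      simp only [pd, Finset.mem_image, Finset.mem_product] at hE
      obtain ⟨⟨Γ, Δ⟩, ⟨hΓ, hΔ⟩, rfl⟩ := hE
      rw [LTL.satConj_union] at hEs
      exact ⟨⟨Γ, hΓ, hEs.1⟩, ⟨Δ, hΔ, hEs.2⟩⟩
  | disj φ ψ ihφ ihψ =>
    rw [show Sat I (LTL.disj φ ψ) σ ↔ Sat I φ σ ∨ Sat I ψ σ from Iff.rfl, ihφ, ihψ]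
    simp only [pd, Finset.mem_union]
    constructor
    · rintro (⟨Γ, hΓ, hs⟩ | ⟨Γ, hΓ, hs⟩)
      · exact ⟨Γ, Or.inl hΓ, hs⟩
      · exact ⟨Γ, Or.inr hΓ, hs⟩
    · rintro ⟨Γ, hΓ | hΓ, hs⟩
      · exact Or.inl ⟨Γ, hΓ, hs⟩
      · exact Or.inr ⟨Γ, hΓ, hs⟩
  | next φ _ =>
    rw [show Sat I (LTL.next φ) σ ↔ Sat I φ (suffix σ 1) from Iff.rfl,
      LTL.simp_correct I φ (suffix σ 1)]
    rfl
  | untl φ ψ ihφ ihψ =>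
    rw [LTL.untl_unfold, ihφ, ihψ]
    simp only [pd, Finset.mem_union, Finset.mem_image]
    constructor
    · rintro (⟨Δ, hΔ, hs⟩ | ⟨⟨Γ, hΓ, hs⟩, hnx⟩)
      · exact ⟨Δ, Or.inl hΔ, hs⟩
      · refine ⟨insert (LTL.untl φ ψ) Γ, Or.inr ⟨Γ, hΓ, rfl⟩, ?_⟩
        exact (LTL.satConj_insert I _ Γ _).mpr ⟨hnx, hs⟩
    · rintro ⟨E, hE | ⟨Γ, hΓ, rfl⟩, hs⟩
      · exact Or.inl ⟨E, hE, hs⟩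
      · rw [LTL.satConj_insert] at hs
        exact Or.inr ⟨⟨Γ, hΓ, hs.2⟩, hs.1⟩
  | rels φ ψ ihφ ihψ =>
    rw [LTL.rels_unfold, ihφ, ihψ]
    simp only [pd, Finset.mem_union, Finset.mem_image, Finset.mem_product]
    constructor
    · rintro (⟨⟨Γ, hΓ, hΓs⟩, ⟨Δ, hΔ, hΔs⟩⟩ | ⟨⟨Δ, hΔ, hΔs⟩, hr⟩)
      · refine ⟨Γ ∪ Δ, Or.inl ⟨(Γ, Δ), ⟨hΓ, hΔ⟩, rfl⟩, ?_⟩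
        exact (LTL.satConj_union I Γ Δ _).mpr ⟨hΓs, hΔs⟩
      · refine ⟨insert (LTL.rels φ ψ) Δ, Or.inr ⟨Δ, hΔ, rfl⟩, ?_⟩
        exact (LTL.satConj_insert I _ Δ _).mpr ⟨hr, hΔs⟩
    · rintro ⟨E, ⟨⟨Γ, Δ⟩, ⟨hΓ, hΔ⟩, rfl⟩ | ⟨Δ, hΔ, rfl⟩, hs⟩
      · rw [LTL.satConj_union] at hs
        exact Or.inl ⟨⟨Γ, hΓ, hs.1⟩, ⟨Δ, hΔ, hs.2⟩⟩
      · rw [LTL.satConj_insert] at hs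
        exact Or.inr ⟨⟨Δ, hΔ, hs.2⟩, hs.1⟩
end

section
/- For every PNF formula φ of size n, the cardinality of the set D(φ) of partial derivative descendants of φ is at most 2^n (and hence is O(2^n)). -/
open scoped Classical

namespace DescCardAux

open LTL

variable {AP : Type} {S : Type} [DecidableEq AP]

/-- Top-level temporal parts. -/
def TS : LTL AP → Finset (LTL AP)
  | .conj φ ψ => TS φ ∪ TS ψ
  | .disj φ ψ => TS φ ∪ TS ψ
  | φ => {φ}

/-- A closed finite superset for all descendants' elements. -/
def TT : LTL AP → Finset (LTL AP)
  | .conj φ ψ => TT φ ∪ TT ψ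
  | .disj φ ψ => TT φ ∪ TT ψ
  | .next φ => TS φ ∪ TT φ
  | .untl φ ψ => insert (.untl φ ψ) (TT φ ∪ TT ψ)
  | .rels φ ψ => insert (.rels φ ψ) (TT φ ∪ TT ψ)
  | _ => ∅

lemma simp_subset_TS : ∀ (φ : LTL AP), ∀ Γ ∈ SIMP φ, Γ ⊆ TS φ := by
  intro φ
  induction φ with
  | conj φ ψ ihφ ihψ =>
    intro Γ hΓ
    simp only [SIMP, Finset.mem_biUnion, Finset.mem_image] at hΓ
    obtain ⟨A, hA, B, hB, rfl⟩ := hΓ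
    exact Finset.union_subset_union (ihφ A hA) (ihψ B hB)
  | disj φ ψ ihφ ihψ =>
    intro Γ hΓ
    simp only [SIMP, Finset.mem_union] at hΓ
    rcases hΓ with h | h
    · exact (ihφ Γ h).trans Finset.subset_union_left
    · exact (ihψ Γ h).trans Finset.subset_union_right
  | _ =>
    intro Γ hΓ
    simp only [SIMP, Finset.mem_singleton] at hΓ
    subst hΓ
    first
    | exact Finset.Subset.refl _

lemma TT_subset_of_mem_TS : ∀ (φ χ : LTL AP), χ ∈ TS φ → TT χ ⊆ TT φ := by
  intro φ
  induction φ with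
  | conj φ ψ ihφ ihψ =>
    intro χ hχ
    simp only [TS, Finset.mem_union] at hχ
    rcases hχ with h | h
    · exact (ihφ χ h).trans Finset.subset_union_left
    · exact (ihψ χ h).trans Finset.subset_union_right
  | disj φ ψ ihφ ihψ =>
    intro χ hχ
    simp only [TS, Finset.mem_union] at hχ
    rcases hχ with h | h
    · exact (ihφ χ h).trans Finset.subset_union_left
    · exact (ihψ χ h).trans Finset.subset_union_right
  | _ =>
    intro χ hχ
    simp only [TS, Finset.mem_singleton] at hχ
    subst hχ
    exact Finset.Subset.refl _

lemma TT_subset_of_mem_TT : ∀ (φ χ : LTL AP), χ ∈ TT φ → TT χ ⊆ TT φ := by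
  intro φ
  induction φ with
  | conj φ ψ ihφ ihψ =>
    intro χ hχ
    simp only [TT, Finset.mem_union] at hχ
    rcases hχ with h | h
    · exact (ihφ χ h).trans Finset.subset_union_left
    · exact (ihψ χ h).trans Finset.subset_union_right
  | disj φ ψ ihφ ihψ =>
    intro χ hχ
    simp only [TT, Finset.mem_union] at hχ
    rcases hχ with h | h
    · exact (ihφ χ h).trans Finset.subset_union_left
    · exact (ihψ χ h).trans Finset.subset_union_right
  | next φ ihφ =>
    intro χ hχ
    simp only [TT, Finset.mem_union] at hχ
    rcases hχ with h | h
    · exact (TT_subset_of_mem_TS φ χ h).trans Finset.subset_union_right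
    · exact (ihφ χ h).trans Finset.subset_union_right
  | untl φ ψ ihφ ihψ =>
    intro χ hχ
    simp only [TT, Finset.mem_insert, Finset.mem_union] at hχ
    rcases hχ with rfl | h | h
    · exact Finset.Subset.refl _
    · exact (ihφ χ h).trans (Finset.subset_union_left.trans (Finset.subset_insert _ _))
    · exact (ihψ χ h).trans (Finset.subset_union_right.trans (Finset.subset_insert _ _))
  | rels φ ψ ihφ ihψ =>
    intro χ hχ
    simp only [TT, Finset.mem_insert, Finset.mem_union] at hχ
    rcases hχ with rfl | h | h
    · exact Finset.Subset.refl _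
    · exact (ihφ χ h).trans (Finset.subset_union_left.trans (Finset.subset_insert _ _))
    · exact (ihψ χ h).trans (Finset.subset_union_right.trans (Finset.subset_insert _ _))
  | _ =>
    intro χ hχ
    simp [TT] at hχ

lemma pd_subset_TT (I : S → Set AP) :
    ∀ (φ : LTL AP) (x : S), ∀ Γ ∈ pd I φ x, Γ ⊆ TT φ := by
  intro φ
  induction φ with
  | pos p =>
    intro x Γ hΓ
    simp only [pd] at hΓ
    split at hΓ <;> simp_all
  | nneg p =>
    intro x Γ hΓ
    simp only [pd] at hΓ
    split at hΓ <;> simp_all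
  | tt =>
    intro x Γ hΓ
    simp only [pd, Finset.mem_singleton] at hΓ
    simp [hΓ]
  | ff =>
    intro x Γ hΓ
    simp [pd] at hΓ
  | conj φ ψ ihφ ihψ =>
    intro x Γ hΓ
    simp only [pd, Finset.mem_image, Finset.mem_product] at hΓ
    obtain ⟨⟨A, B⟩, ⟨hA, hB⟩, rfl⟩ := hΓ
    exact Finset.union_subset_union (ihφ x A hA) (ihψ x B hB)
  | disj φ ψ ihφ ihψ =>
    intro x Γ hΓ
    simp only [pd, Finset.mem_union] at hΓ
    rcases hΓ with h | h
    · exact (ihφ x Γ h).trans Finset.subset_union_left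
    · exact (ihψ x Γ h).trans Finset.subset_union_right
  | next φ ihφ =>
    intro x Γ hΓ
    simp only [pd] at hΓ
    exact (simp_subset_TS φ Γ hΓ).trans Finset.subset_union_left
  | untl φ ψ ihφ ihψ =>
    intro x Γ hΓ
    simp only [pd, Finset.mem_union, Finset.mem_image] at hΓ
    rcases hΓ with h | ⟨A, hA, rfl⟩
    · exact (ihψ x Γ h).trans
        (Finset.subset_union_right.trans (Finset.subset_insert _ _))
    · exact Finset.insert_subset (Finset.mem_insert_self _ _)
        ((ihφ x A hA).trans
          (Finset.subset_union_left.trans (Finset.subset_insert _ _)))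
  | rels φ ψ ihφ ihψ =>
    intro x Γ hΓ
    simp only [pd, Finset.mem_union, Finset.mem_image, Finset.mem_product] at hΓ
    rcases hΓ with ⟨⟨A, B⟩, ⟨hA, hB⟩, rfl⟩ | ⟨A, hA, rfl⟩
    · exact (Finset.union_subset_union (ihφ x A hA) (ihψ x B hB)).trans
        (Finset.subset_insert _ _)
    · exact Finset.insert_subset (Finset.mem_insert_self _ _)
        ((ihψ x A hA).trans
          (Finset.subset_union_right.trans (Finset.subset_insert _ _)))

lemma card_TS_union_TT : ∀ (φ : LTL AP), (TS φ ∪ TT φ).card ≤ size φ := by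
  intro φ
  induction φ with
  | conj φ ψ ihφ ihψ =>
    calc (TS (LTL.conj φ ψ) ∪ TT (LTL.conj φ ψ)).card
        = ((TS φ ∪ TT φ) ∪ (TS ψ ∪ TT ψ)).card := by
          simp only [TS, TT]; congr 1; ac_rfl
      _ ≤ (TS φ ∪ TT φ).card + (TS ψ ∪ TT ψ).card := Finset.card_union_le _ _
      _ ≤ size φ + size ψ := Nat.add_le_add ihφ ihψ
      _ ≤ size (LTL.conj φ ψ) := Nat.le_succ _
  | disj φ ψ ihφ ihψ =>
    calc (TS (LTL.disj φ ψ) ∪ TT (LTL.disj φ ψ)).card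
        = ((TS φ ∪ TT φ) ∪ (TS ψ ∪ TT ψ)).card := by
          simp only [TS, TT]; congr 1; ac_rfl
      _ ≤ (TS φ ∪ TT φ).card + (TS ψ ∪ TT ψ).card := Finset.card_union_le _ _
      _ ≤ size φ + size ψ := Nat.add_le_add ihφ ihψ
      _ ≤ size (LTL.disj φ ψ) := Nat.le_succ _
  | next φ ihφ =>
    calc (TS (LTL.next φ) ∪ TT (LTL.next φ)).card
        = (insert (LTL.next φ) (TS φ ∪ TT φ)).card := by
          simp only [TS, TT]; rw [← Finset.insert_eq]
      _ ≤ (TS φ ∪ TT φ).card + 1 := Finset.card_insert_le _ _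
      _ ≤ size φ + 1 := Nat.add_le_add_right ihφ 1
      _ = size (LTL.next φ) := rfl
  | untl φ ψ ihφ ihψ =>
    have hφ : (TT φ).card ≤ size φ :=
      le_trans (Finset.card_le_card Finset.subset_union_right) ihφ
    have hψ : (TT ψ).card ≤ size ψ :=
      le_trans (Finset.card_le_card Finset.subset_union_right) ihψ
    calc (TS (LTL.untl φ ψ) ∪ TT (LTL.untl φ ψ)).card
        = (insert (LTL.untl φ ψ) (TT φ ∪ TT ψ)).card := by
          simp only [TS, TT]; rw [← Finset.insert_eq, Finset.insert_idem]
      _ ≤ (TT φ ∪ TT ψ).card + 1 := Finset.card_insert_le _ _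
      _ ≤ ((TT φ).card + (TT ψ).card) + 1 :=
          Nat.add_le_add_right (Finset.card_union_le _ _) 1
      _ ≤ (size φ + size ψ) + 1 := Nat.add_le_add_right (Nat.add_le_add hφ hψ) 1
      _ = size (LTL.untl φ ψ) := rfl
  | rels φ ψ ihφ ihψ =>
    have hφ : (TT φ).card ≤ size φ :=
      le_trans (Finset.card_le_card Finset.subset_union_right) ihφ
    have hψ : (TT ψ).card ≤ size ψ :=
      le_trans (Finset.card_le_card Finset.subset_union_right) ihψ
    calc (TS (LTL.rels φ ψ) ∪ TT (LTL.rels φ ψ)).card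
        = (insert (LTL.rels φ ψ) (TT φ ∪ TT ψ)).card := by
          simp only [TS, TT]; rw [← Finset.insert_eq, Finset.insert_idem]
      _ ≤ (TT φ ∪ TT ψ).card + 1 := Finset.card_insert_le _ _
      _ ≤ ((TT φ).card + (TT ψ).card) + 1 :=
          Nat.add_le_add_right (Finset.card_union_le _ _) 1
      _ ≤ (size φ + size ψ) + 1 := Nat.add_le_add_right (Nat.add_le_add hφ hψ) 1
      _ = size (LTL.rels φ ψ) := rfl
  | _ =>
    simp [TS, TT, size]

lemma desc_subset_TT (I : S → Set AP) (φ : LTL AP) (Γ : Finset (LTL AP))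
    (h : LTL.Desc I φ Γ) : Γ ⊆ TT φ := by
  induction h with
  | base x Γ hΓ => exact pd_subset_TT I φ x Γ hΓ
  | step x Γ Δ hΓ hΔ ih =>
    obtain ⟨f, hf, rfl⟩ := hΔ
    intro χ hχ
    simp only [Finset.mem_biUnion] at hχ
    obtain ⟨ρ, hρ, hχ⟩ := hχ
    exact TT_subset_of_mem_TT φ ρ (ih hρ)
      (pd_subset_TT I ρ x (f ρ) (hf ρ hρ) hχ)

end DescCardAux

/-- Theorem: the number of partial derivative descendants of `φ` is at most
`2 ^ size φ`. -/
theorem desc_card {AP S : Type} [Fintype AP] [Fintype S] [DecidableEq AP]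
    (I : S → Set AP) (φ : LTL AP) :
    {Γ : Finset (LTL AP) | LTL.Desc I φ Γ}.ncard ≤ 2 ^ LTL.size φ := by
  classical
  have hsub : {Γ : Finset (LTL AP) | LTL.Desc I φ Γ} ⊆
      ↑(DescCardAux.TT φ).powerset := by
    intro Γ hΓ
    simp only [Finset.coe_powerset, Set.mem_preimage, Set.mem_powerset_iff,
      Finset.coe_subset]
    exact DescCardAux.desc_subset_TT I φ Γ hΓ
  calc {Γ : Finset (LTL AP) | LTL.Desc I φ Γ}.ncard
      ≤ (↑(DescCardAux.TT φ).powerset : Set (Finset (LTL AP))).ncard :=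
        Set.ncard_le_ncard hsub (Finset.finite_toSet _)
    _ = (DescCardAux.TT φ).powerset.card := Set.ncard_coe_finset _
    _ = 2 ^ (DescCardAux.TT φ).card := Finset.card_powerset _
    _ ≤ 2 ^ LTL.size φ := Nat.pow_le_pow_right (by norm_num)
        (le_trans (Finset.card_le_card Finset.subset_union_right)
          (DescCardAux.card_TS_union_TT φ))
end
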